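/- Let f : [0,1]^d → R be a continuously differentiable non-negative γ-weakly up-concave function with γ ∈ (0,1]. Then for any x, y ∈ [0,1]^d, f(x ∨ y) ≥ (1 − γ ||x||_∞) f(y). -/

import Mathlib

open scoped RealInnerProductSpace

/-- The unit box `[0,1]^d` in Euclidean space. -/
def unitBox (d : ℕ) : Set (EuclideanSpace ℝ (Fin d)) :=
  {x | ∀ i, x i ∈ Set.Icc (0 : ℝ) 1}

/-- Coordinatewise maximum of two vectors in Euclidean space. -/
noncomputable def vecSup {d : ℕ} (x y : EuclideanSpace ℝ (Fin d)) : EuclideanSpace ℝ (Fin d) :=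
  WithLp.toLp 2 (fun i => max (x i) (y i))

/-- The sup norm `‖x‖_∞ = max_i |x_i|`. -/
noncomputable def supNorm {d : ℕ} (x : EuclideanSpace ℝ (Fin d)) : ℝ :=
  ⨆ i, |x i|

/-! Along the segment `t ↦ y + t • (z - y)` from `y` to `z = x ∨ y`, weak up-concavity becomes
a one-variable condition on `φ t = f (y + t • (z - y))` with slope
`ψ t = ⟪g (y + t • (z - y)), z - y⟫`.

If `γ < 1`, applying both inequalities at a point `m`, the midpoint `m'` of `[m, b]` and `b` gives
`(1 + γ²) (φ b - φ m') ≤ φ b - φ m`. Along the points `mₙ = b - (b - a) / 2ⁿ` this yields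
`(1 + γ²)ⁿ (φ b - φ mₙ) ≤ φ b - φ a`, while `φ b - φ mₙ ≥ γ 2⁻ⁿ (b - a) ψ b`; since
`(1 + γ²) / 2 < 1`, letting `n → ∞` gives `φ a ≤ φ b`, hence `f y ≤ f z`.

If `γ = 1`, the segment stays in the box up to `t = 1 / ‖x‖_∞`, since `zᵢ - yᵢ ≤ ‖x‖_∞ (1 - yᵢ)`.
Non-negativity of `f` at that far end, combined with the two inequalities at `t = 1`, gives
`(1 - ‖x‖_∞) f y ≤ f z`. -/

open Set Filter Topology

def WeaklyUpConcaveOn (γ : ℝ) (φ ψ : ℝ → ℝ) (I : Set ℝ) : Prop :=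
  ∀ s ∈ I, ∀ t ∈ I, s ≤ t →
    γ * ((t - s) * ψ t) ≤ φ t - φ s ∧ φ t - φ s ≤ 1 / γ * ((t - s) * ψ s)

theorem sub_div_two_pow_mem_Icc {a b : ℝ} (hab : a ≤ b) (n : ℕ) :
    b - (b - a) / 2 ^ n ∈ Icc a b := by
  have hpow : (1 : ℝ) ≤ 2 ^ n := one_le_pow₀ one_le_two
  exact ⟨by linarith [div_le_self (sub_nonneg.2 hab) hpow],
    by linarith [div_nonneg (sub_nonneg.2 hab) (zero_le_one.trans hpow)]⟩

namespace WeaklyUpConcaveOn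

variable {γ a b s : ℝ} {φ ψ : ℝ → ℝ} {I : Set ℝ}

theorem mul_sub_le (h : WeaklyUpConcaveOn γ φ ψ I) (hγ : 0 < γ) {s t : ℝ} (hs : s ∈ I)
    (ht : t ∈ I) (hst : s ≤ t) : γ * (φ t - φ s) ≤ (t - s) * ψ s := by
  have := mul_le_mul_of_nonneg_left (h s hs t ht hst).2 hγ.le
  rwa [← mul_assoc, mul_one_div_cancel hγ.ne', one_mul] at this

theorem one_add_sq_mul_sub_le (h : WeaklyUpConcaveOn γ φ ψ I) (hγ : 0 < γ) {s m t : ℝ}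
    (hs : s ∈ I) (hm : m ∈ I) (ht : t ∈ I) (hmt : m ≤ t) (hmid : m - s = t - m) :
    (1 + γ ^ 2) * (φ t - φ m) ≤ φ t - φ s := by
  have hleft := (h s hs m hm (by linarith)).1
  have hright := mul_le_mul_of_nonneg_left (h.mul_sub_le hγ hm ht hmt) hγ.le
  rw [← hmid] at hright
  nlinarith

theorem one_add_sq_pow_mul_sub_le (h : WeaklyUpConcaveOn γ φ ψ (Icc a b)) (hγ : 0 < γ)
    (hab : a ≤ b) (n : ℕ) :
    (1 + γ ^ 2) ^ n * (φ b - φ (b - (b - a) / 2 ^ n)) ≤ φ b - φ a := by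
  have hmem := sub_div_two_pow_mem_Icc hab
  induction n with
  | zero => simp
  | succ n ih =>
    have hstep : (1 + γ ^ 2) * (φ b - φ (b - (b - a) / 2 ^ (n + 1))) ≤
        φ b - φ (b - (b - a) / 2 ^ n) :=
      h.one_add_sq_mul_sub_le hγ (hmem n) (hmem (n + 1)) (right_mem_Icc.2 hab)
        (hmem (n + 1)).2 (by rw [pow_succ]; ring)
    calc (1 + γ ^ 2) ^ (n + 1) * (φ b - φ (b - (b - a) / 2 ^ (n + 1)))
        = (1 + γ ^ 2) ^ n * ((1 + γ ^ 2) * (φ b - φ (b - (b - a) / 2 ^ (n + 1)))) := by ring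
      _ ≤ (1 + γ ^ 2) ^ n * (φ b - φ (b - (b - a) / 2 ^ n)) := by gcongr
      _ ≤ φ b - φ a := ih

theorem le_of_lt_one (h : WeaklyUpConcaveOn γ φ ψ (Icc a b)) (hγ0 : 0 < γ) (hγ1 : γ < 1)
    (hab : a ≤ b) : φ a ≤ φ b := by
  have hbound : ∀ n : ℕ, γ * ((b - a) * ψ b) * ((1 + γ ^ 2) / 2) ^ n ≤ φ b - φ a := by
    intro n
    have hmem := sub_div_two_pow_mem_Icc hab n
    have hlow := (h _ hmem b (right_mem_Icc.2 hab) hmem.2).1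
    calc γ * ((b - a) * ψ b) * ((1 + γ ^ 2) / 2) ^ n
        = (1 + γ ^ 2) ^ n * (γ * ((b - (b - (b - a) / 2 ^ n)) * ψ b)) := by
          rw [div_pow]; ring
      _ ≤ (1 + γ ^ 2) ^ n * (φ b - φ (b - (b - a) / 2 ^ n)) := by gcongr
      _ ≤ φ b - φ a := h.one_add_sq_pow_mul_sub_le hγ0 hab n
  have htend : Tendsto (fun n : ℕ => γ * ((b - a) * ψ b) * ((1 + γ ^ 2) / 2) ^ n) atTop (𝓝 0) := by
    simpa using (tendsto_pow_atTop_nhds_zero_of_lt_one (by positivity) (by nlinarith)).const_mul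
      (γ * ((b - a) * ψ b))
  linarith [le_of_tendsto' htend hbound]

theorem sub_mul_le_of_nonneg (h : WeaklyUpConcaveOn γ φ ψ (Icc 0 s⁻¹)) (hγ : 0 < γ) (hs0 : 0 < s)
    (hs1 : s ≤ 1) (hφ : 0 ≤ φ s⁻¹) : (1 - s) * φ 0 ≤ (1 - s + γ ^ 2 * s) * φ 1 := by
  have hmem : (1 : ℝ) ∈ Icc 0 s⁻¹ := ⟨zero_le_one, one_le_inv₀ hs0 |>.2 hs1⟩
  have hleft := (h 0 (left_mem_Icc.2 (inv_nonneg.2 hs0.le)) 1 hmem zero_le_one).1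
  have hright := mul_le_mul_of_nonneg_left
    (h.mul_sub_le hγ hmem (right_mem_Icc.2 (inv_nonneg.2 hs0.le)) hmem.2) hs0.le
  rw [← mul_assoc s (s⁻¹ - 1), mul_sub s s⁻¹, mul_inv_cancel₀ hs0.ne', mul_one] at hright
  nlinarith [mul_le_mul_of_nonneg_left hleft (sub_nonneg.2 hs1),
    mul_le_mul_of_nonneg_left hright hγ.le, mul_nonneg (mul_nonneg (sq_nonneg γ) hs0.le) hφ]

end WeaklyUpConcaveOn

theorem weaklyUpConcaveOn_segment {ι : Type*} [Fintype ι] {γ : ℝ}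
    {f : EuclideanSpace ℝ ι → ℝ} {g : EuclideanSpace ℝ ι → EuclideanSpace ℝ ι}
    {S : Set (EuclideanSpace ℝ ι)}
    (hf : ∀ u ∈ S, ∀ v ∈ S, (∀ i, u i ≤ v i) →
      γ * ⟪g v, v - u⟫ ≤ f v - f u ∧ f v - f u ≤ (1 / γ) * ⟪g u, v - u⟫)
    {y z : EuclideanSpace ℝ ι} (hyz : ∀ i, y i ≤ z i) {I : Set ℝ}
    (hI : ∀ t ∈ I, y + t • (z - y) ∈ S) :
    WeaklyUpConcaveOn γ (fun t => f (y + t • (z - y)))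
      (fun t => ⟪g (y + t • (z - y)), z - y⟫) I := by
  intro s hs t ht hst
  have hdiff : y + t • (z - y) - (y + s • (z - y)) = (t - s) • (z - y) := by module
  have hle : ∀ i, (y + s • (z - y)) i ≤ (y + t • (z - y)) i := fun i => by
    simp only [PiLp.add_apply, PiLp.smul_apply, PiLp.sub_apply, smul_eq_mul]
    nlinarith [hyz i]
  simpa only [hdiff, real_inner_smul_right] using hf _ (hI s hs) _ (hI t ht) hle

section UnitBox

variable {d : ℕ}

theorem abs_le_supNorm (x : EuclideanSpace ℝ (Fin d)) (i : Fin d) : |x i| ≤ supNorm x :=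
  le_ciSup (f := fun i => |x i|) (finite_range _).bddAbove i

theorem supNorm_nonneg (x : EuclideanSpace ℝ (Fin d)) : 0 ≤ supNorm x :=
  Real.iSup_nonneg fun _ => abs_nonneg _

theorem supNorm_le_one {x : EuclideanSpace ℝ (Fin d)} (hx : x ∈ unitBox d) : supNorm x ≤ 1 :=
  Real.iSup_le (fun i => abs_le.2 ⟨by linarith [(hx i).1], (hx i).2⟩) zero_le_one

theorem le_vecSup_right (x y : EuclideanSpace ℝ (Fin d)) (i : Fin d) : y i ≤ vecSup x y i :=
  le_max_right _ _

theorem vecSup_eq_right {x y : EuclideanSpace ℝ (Fin d)} (h : ∀ i, x i ≤ y i) : vecSup x y = y := by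
  ext i
  exact max_eq_right (h i)

theorem vecSup_sub_le {x y : EuclideanSpace ℝ (Fin d)} (hx : x ∈ unitBox d) (hy : y ∈ unitBox d)
    (i : Fin d) : vecSup x y i - y i ≤ supNorm x * (1 - y i) := by
  have hxi := (le_abs_self (x i)).trans (abs_le_supNorm x i)
  have := mul_le_mul_of_nonneg_right (supNorm_le_one hx) (hy i).1
  rcases le_total (x i) (y i) with h | h
  · rw [vecSup, PiLp.toLp_apply, max_eq_right h, sub_self]
    exact mul_nonneg (supNorm_nonneg x) (by linarith [(hy i).2])
  · rw [vecSup, PiLp.toLp_apply, max_eq_left h]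
    linarith

theorem add_smul_vecSup_sub_mem_unitBox {x y : EuclideanSpace ℝ (Fin d)} (hx : x ∈ unitBox d)
    (hy : y ∈ unitBox d) {t : ℝ} (ht : 0 ≤ t) (hts : t * supNorm x ≤ 1) :
    y + t • (vecSup x y - y) ∈ unitBox d := by
  intro i
  simp only [PiLp.add_apply, PiLp.smul_apply, PiLp.sub_apply, smul_eq_mul]
  have hup := mul_le_mul_of_nonneg_left (vecSup_sub_le hx hy i) ht
  obtain ⟨hy0, hy1⟩ := hy i
  have hts' := mul_le_mul_of_nonneg_right hts (sub_nonneg.2 hy1)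
  constructor
  · nlinarith [mul_nonneg ht (sub_nonneg.2 (le_vecSup_right x y i))]
  · nlinarith

end UnitBox

theorem f_join_lower_bound_general
    (d : ℕ) (γ : ℝ) (hγ0 : 0 < γ) (hγ1 : γ ≤ 1)
    (f : EuclideanSpace ℝ (Fin d) → ℝ)
    (g : EuclideanSpace ℝ (Fin d) → EuclideanSpace ℝ (Fin d))
    (hnonneg : ∀ x ∈ unitBox d, 0 ≤ f x)
    (hupconcave : ∀ u ∈ unitBox d, ∀ v ∈ unitBox d, (∀ i, u i ≤ v i) →
      γ * ⟪g v, v - u⟫ ≤ f v - f u ∧ f v - f u ≤ (1 / γ) * ⟪g u, v - u⟫) :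
    ∀ x ∈ unitBox d, ∀ y ∈ unitBox d,
      (1 - γ * supNorm x) * f y ≤ f (vecSup x y) := by
  intro x hx y hy
  have hsegment (T : ℝ) (hT : T * supNorm x ≤ 1) := weaklyUpConcaveOn_segment hupconcave
    (le_vecSup_right x y) (I := Icc 0 T) fun t ht =>
      add_smul_vecSup_sub_mem_unitBox hx hy ht.1
        (by nlinarith [mul_le_mul_of_nonneg_right ht.2 (supNorm_nonneg x)])
  rcases hγ1.lt_or_eq with hγ1 | rfl
  · have hmono : f y ≤ f (vecSup x y) := by
      simpa using (hsegment 1 (by simpa using supNorm_le_one hx)).le_of_lt_one hγ0 hγ1 zero_le_one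
    nlinarith [mul_nonneg (mul_nonneg hγ0.le (supNorm_nonneg x)) (hnonneg y hy)]
  rcases (supNorm_nonneg x).eq_or_lt with hs0 | hs0
  · have hxy (i : Fin d) : x i ≤ y i :=
      calc x i ≤ supNorm x := (le_abs_self _).trans (abs_le_supNorm x i)
        _ = 0 := hs0.symm
        _ ≤ y i := (hy i).1
    simp [vecSup_eq_right hxy, ← hs0]
  · have hT : (supNorm x)⁻¹ * supNorm x = 1 := inv_mul_cancel₀ hs0.ne'
    have hext := (hsegment _ hT.le).sub_mul_le_of_nonneg one_pos hs0 (supNorm_le_one hx)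
      (hnonneg _ (add_smul_vecSup_sub_mem_unitBox hx hy (inv_nonneg.2 hs0.le) hT.le))
    simp only [zero_smul, add_zero, one_smul, add_sub_cancel] at hext
    linarith

/-- For a continuously differentiable non-negative `γ`-weakly up-concave function
`f : [0,1]^d → ℝ` with `γ ∈ (0,1]`, and any `x, y ∈ [0,1]^d`,
`f(x ∨ y) ≥ (1 − γ‖x‖_∞) f(y)`. -/
theorem f_join_lower_bound
    (d : ℕ) (γ : ℝ) (hγ0 : 0 < γ) (hγ1 : γ ≤ 1)
    (f : EuclideanSpace ℝ (Fin d) → ℝ)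
    (g : EuclideanSpace ℝ (Fin d) → EuclideanSpace ℝ (Fin d))
    (hderiv : ∀ x ∈ unitBox d, HasGradientAt f (g x) x)
    (hcont : Continuous g)
    (hnonneg : ∀ x ∈ unitBox d, 0 ≤ f x)
    (hupconcave : ∀ u ∈ unitBox d, ∀ v ∈ unitBox d, (∀ i, u i ≤ v i) →
      γ * ⟪g v, v - u⟫ ≤ f v - f u ∧ f v - f u ≤ (1 / γ) * ⟪g u, v - u⟫) :
    ∀ x ∈ unitBox d, ∀ y ∈ unitBox d,
      (1 - γ * supNorm x) * f y ≤ f (vecSup x y) :=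
  f_join_lower_bound_general d γ hγ0 hγ1 f g hnonneg hupconcave
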